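/- Let k ≤ n, let u^(1),...,u^(γ) ∈ ℓ²(ℝ) be mutually orthonormal with (u^(1))_(n),...,(u^(γ))_(n) linearly independent in ℝ^n, let p_1,...,p_γ ∈ ℝ, let θ_n be the point of A_n closest to the origin, and assume ‖θ_n‖ < √n; set r_n := √(n − ‖θ_n‖²)/√n. Then for every Borel set B ⊆ ℝ^k, σ̄_{S_{A_n}}({x ∈ S_{A_n} : π_k(x) ∈ B}) = σ̄_{S_{H_n}}({x ∈ S_{H_n} : π_k(x) ∈ r_n^{-1}(B − π_k(θ_n))}). -/

import Mathlib

open MeasureTheory ProbabilityTheory Filter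

noncomputable section

/-- The Hilbert space `ℓ²(ℝ)` of square-summable real sequences. -/
abbrev Ell2 : Type := lp (fun _ : ℕ => ℝ) 2

/-- Truncation of a square-summable sequence to its first `n` coordinates. -/
def trunc (n : ℕ) (u : Ell2) : EuclideanSpace ℝ (Fin n) :=
  (EuclideanSpace.equiv (Fin n) ℝ).symm fun i => u i

/-- Projection of `ℝ^n` onto the first `k` coordinates (junk `0` beyond `n`). -/
def projk (k n : ℕ) (x : EuclideanSpace ℝ (Fin n)) : EuclideanSpace ℝ (Fin k) :=
  (EuclideanSpace.equiv (Fin k) ℝ).symm fun i => if h : (i : ℕ) < n then x ⟨i, h⟩ else 0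

/-- Extension of a vector of `ℝ^k` to `ℝ^n` by appending zeros. -/
def extendk {k : ℕ} (n : ℕ) (v : EuclideanSpace ℝ (Fin k)) : EuclideanSpace ℝ (Fin n) :=
  (EuclideanSpace.equiv (Fin n) ℝ).symm fun i => if h : (i : ℕ) < k then v ⟨i, h⟩ else 0

/-- The matrix of the orthogonal projection of `ℝ^k` onto the span of `v` (zero if `v = 0`). -/
def projMatrix {k : ℕ} (v : EuclideanSpace ℝ (Fin k)) : Matrix (Fin k) (Fin k) ℝ :=
  (‖v‖ ^ 2)⁻¹ • Matrix.vecMulVec (fun i => v i) (fun i => v i)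

/-- The positive semidefinite square root of a positive semidefinite matrix (the definition
`Matrix.PosSemidef.sqrt` of the older Mathlib, removed since). -/
def Matrix.PosSemidef.sqrt {n : Type*} [Fintype n] [DecidableEq n]
    {A : Matrix n n ℝ} (hA : A.PosSemidef) : Matrix n n ℝ :=
  hA.1.eigenvectorUnitary.1 * Matrix.diagonal ((↑) ∘ (Real.sqrt ·) ∘ hA.1.eigenvalues) *
    (star hA.1.eigenvectorUnitary : Matrix n n ℝ)

/-- The Gaussian measure on `ℝ^k` with mean `ρ` and positive-semidefinite covariance matrix `L`,
realized as the pushforward of the standard Gaussian under `x ↦ ρ + √L x`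
(zero junk measure if `L` is not positive semidefinite). -/
def gaussianOf {k : ℕ} (ρ : EuclideanSpace ℝ (Fin k)) (L : Matrix (Fin k) (Fin k) ℝ) :
    Measure (EuclideanSpace ℝ (Fin k)) :=
  open Classical in
  if hL : L.PosSemidef then
    Measure.map (fun x : Fin k → ℝ =>
        ρ + (EuclideanSpace.equiv (Fin k) ℝ).symm (hL.sqrt.mulVec x))
      (Measure.pi fun _ : Fin k => gaussianReal 0 1)
  else 0

/-- The uniform probability measure on a set `S ⊆ ℝ^n`, namely the `d`-dimensional Hausdorff
measure restricted to `S` and normalized to total mass 1. -/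
def unifProb {n : ℕ} (d : ℝ) (S : Set (EuclideanSpace ℝ (Fin n))) :
    Measure (EuclideanSpace ℝ (Fin n)) :=
  (μH[d] S)⁻¹ • (μH[d]).restrict S

/-- `S_{A_n}`: the sphere of radius `√n` in `ℝ^n` intersected with the affine subspace
`{x : ⟪x, (u i)_(n)⟫ = p i}`. -/
def SA {γ : ℕ} (u : Fin γ → Ell2) (p : Fin γ → ℝ) (n : ℕ) : Set (EuclideanSpace ℝ (Fin n)) :=
  Metric.sphere 0 (Real.sqrt n) ∩ {x | ∀ i, (inner ℝ x (trunc n (u i)) : ℝ) = p i}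

end

noncomputable section

/-- `S_{H_n}`: the sphere of radius `√n` in `ℝ^n` intersected with the linear subspace
`{x : ⟪x, (u i)_(n)⟫ = 0}`. -/
def SH {γ : ℕ} (u : Fin γ → Ell2) (n : ℕ) : Set (EuclideanSpace ℝ (Fin n)) :=
  Metric.sphere 0 (Real.sqrt n) ∩ {x | ∀ i, (inner ℝ x (trunc n (u i)) : ℝ) = 0}

/-! The affine map `x ↦ θₙ + rₙ x` carries `S_{H_n}` onto `S_{A_n}`: since `θₙ` is the closest
point of `A_n` to the origin it is orthogonal to `H_n`, so by Pythagoras `‖θₙ + rₙ x‖² = n` for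
`x ∈ S_{H_n}`. This map scales `(n - γ - 1)`-dimensional Hausdorff measure by the constant
`rₙ ^ (n - γ - 1)`, which cancels in the normalized measures, and it intertwines `π_k` with
`b ↦ π_k(θₙ) + rₙ b`. -/

open scoped RealInnerProductSpace

section Hausdorff

variable {X : Type*} [EMetricSpace X] [MeasurableSpace X] [BorelSpace X]

theorem hausdorffMeasure_eq_top_of_neg {d : ℝ} (hd : d < 0) {s : Set X} (hs : s.Nonempty) :
    μH[d] s = ⊤ := by
  refine (Measure.hausdorffMeasure_zero_or_top hd s).resolve_left fun h => ?_
  obtain ⟨x, hx⟩ := hs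
  have h1 : μH[0] ({x} : Set X) ≤ μH[0] s := measure_mono (Set.singleton_subset_iff.2 hx)
  rw [Measure.hausdorffMeasure_zero_singleton, h] at h1
  exact absurd h1 (by norm_num)

variable {E : Type*} [NormedAddCommGroup E] [NormedSpace ℝ E] [MeasurableSpace E] [BorelSpace E]

theorem hausdorffMeasure_image_add_smul {d : ℝ} (hd : 0 ≤ d) (θ : E) {r : ℝ} (hr : r ≠ 0)
    (s : Set E) : μH[d] ((fun x => θ + r • x) '' s) = ‖r‖₊ ^ d • μH[d] s := by
  rw [show (fun x : E => θ + r • x) = IsometryEquiv.addLeft θ ∘ (r • ·) from rfl,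
    Set.image_comp, IsometryEquiv.hausdorffMeasure_image, Set.image_smul,
    Measure.hausdorffMeasure_smul₀ hd hr]

end Hausdorff

section AffineImage

variable {K E : Type*} [Field K] [AddCommGroup E] [Module K E] {r : K}

theorem image_add_smul_eq_preimage (θ : E) (hr : r ≠ 0) :
    Set.image (fun x => θ + r • x) = Set.preimage (fun y => r⁻¹ • (y - θ)) :=
  Set.image_eq_preimage_of_inverse (fun x => by simp [hr]) (fun y => by simp [hr])

theorem image_inv_smul_sub_eq_preimage (θ : E) (hr : r ≠ 0) :
    Set.image (fun y => r⁻¹ • (y - θ)) = Set.preimage (fun x => θ + r • x) :=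
  Set.image_eq_preimage_of_inverse (fun y => by simp [hr]) (fun x => by simp [hr])

end AffineImage

section UnifProb

variable {n : ℕ}

theorem unifProb_of_neg {d : ℝ} (hd : d < 0) (S : Set (EuclideanSpace ℝ (Fin n))) :
    unifProb d S = 0 := by
  rcases S.eq_empty_or_nonempty with rfl | hS
  · simp [unifProb]
  · simp [unifProb, hausdorffMeasure_eq_top_of_neg hd hS]

theorem unifProb_image_add_smul (d : ℝ) (θ : EuclideanSpace ℝ (Fin n)) {r : ℝ} (hr : r ≠ 0)
    {S : Set (EuclideanSpace ℝ (Fin n))} (hS : MeasurableSet S)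
    (s : Set (EuclideanSpace ℝ (Fin n))) :
    unifProb d ((fun x => θ + r • x) '' S) s = unifProb d S ((fun x => θ + r • x) ⁻¹' s) := by
  rcases lt_or_ge d 0 with hd | hd
  · simp [unifProb_of_neg hd]
  have hTS : MeasurableSet ((fun x => θ + r • x) '' S) := by
    rw [image_add_smul_eq_preimage θ hr]
    exact hS.preimage (by fun_prop)
  have hc0 : ((‖r‖₊ ^ d : NNReal) : ENNReal) ≠ 0 := by
    simpa using (NNReal.rpow_pos (nnnorm_pos.mpr hr)).ne'
  simp only [unifProb, Measure.smul_apply, Measure.restrict_apply' hS,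
    Measure.restrict_apply' hTS, smul_eq_mul, ← Set.image_preimage_inter,
    hausdorffMeasure_image_add_smul hd θ hr, ENNReal.smul_def, ENNReal.mul_inv (Or.inl hc0)
    (Or.inl ENNReal.coe_ne_top), mul_mul_mul_comm, ENNReal.inv_mul_cancel hc0 ENNReal.coe_ne_top,
    one_mul]

end UnifProb

section SlicedSphere

variable {F ι : Type*} [NormedAddCommGroup F] [InnerProductSpace ℝ F]

theorem inner_eq_zero_of_forall_norm_le_norm_add_smul {θ x : F}
    (h : ∀ t : ℝ, ‖θ‖ ≤ ‖θ + t • x‖) : ⟪θ, x⟫ = 0 := by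
  rcases eq_or_ne x 0 with rfl | hx
  · simp
  have hb : 0 < ‖x‖ ^ 2 := by positivity
  have hquad : ∀ t : ℝ, 0 ≤ 2 * t * ⟪θ, x⟫ + t ^ 2 * ‖x‖ ^ 2 := fun t => by
    have := pow_le_pow_left₀ (norm_nonneg θ) (h t) 2
    rw [norm_add_sq_real, inner_smul_right, norm_smul, Real.norm_eq_abs, mul_pow, sq_abs] at this
    linarith
  -- the quadratic in `t` is minimized at `t = -⟪θ, x⟫ / ‖x‖²`, where it equals `-⟪θ, x⟫² / ‖x‖²`
  set t := -⟪θ, x⟫ / ‖x‖ ^ 2 with ht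
  have htb : t * ‖x‖ ^ 2 = -⟪θ, x⟫ := div_mul_cancel₀ _ hb.ne'
  nlinarith [hquad t, sq_nonneg ⟪θ, x⟫]

theorem inner_eq_zero_of_isClosest {v : ι → F} {p : ι → ℝ} {θ : F}
    (hθA : ∀ i, ⟪θ, v i⟫ = p i) (hθmin : ∀ y ∈ {x : F | ∀ i, ⟪x, v i⟫ = p i}, ‖θ‖ ≤ ‖y‖)
    {x : F} (hx : ∀ i, ⟪x, v i⟫ = 0) : ⟪θ, x⟫ = 0 :=
  inner_eq_zero_of_forall_norm_le_norm_add_smul fun t =>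
    hθmin _ fun i => by rw [inner_add_left, inner_smul_left, hx i, hθA i]; simp

theorem image_add_smul_sphere_inter {v : ι → F} {p : ι → ℝ} {θ : F}
    (hθA : ∀ i, ⟪θ, v i⟫ = p i) (hθperp : ∀ x : F, (∀ i, ⟪x, v i⟫ = 0) → ⟪θ, x⟫ = 0)
    {r ρ R : ℝ} (hr : 0 < r) (hρ : 0 ≤ ρ) (hR : 0 ≤ R) (hrad : ‖θ‖ ^ 2 + (r * ρ) ^ 2 = R ^ 2) :
    (fun x => θ + r • x) '' (Metric.sphere 0 ρ ∩ {x | ∀ i, ⟪x, v i⟫ = 0}) =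
      Metric.sphere 0 R ∩ {x | ∀ i, ⟪x, v i⟫ = p i} := by
  rw [image_add_smul_eq_preimage θ hr.ne']
  ext y
  have hA : (∀ i, ⟪r⁻¹ • (y - θ), v i⟫ = 0) ↔ ∀ i, ⟪y, v i⟫ = p i := by
    simp [inner_smul_left, inner_sub_left, hθA, hr.ne', sub_eq_zero]
  simp only [Set.mem_preimage, Set.mem_inter_iff, mem_sphere_zero_iff_norm, Set.mem_ofPred_eq, hA]
  refine and_congr_left fun hy => ?_
  have hpyth : ‖y‖ ^ 2 = ‖θ‖ ^ 2 + ‖y - θ‖ ^ 2 := by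
    have := norm_add_sq_eq_norm_sq_add_norm_sq_real
      (hθperp (y - θ) fun i => by rw [inner_sub_left, hy i, hθA i, sub_self])
    rw [add_sub_cancel] at this
    simpa only [sq] using this
  rw [norm_smul, norm_inv, Real.norm_eq_abs, abs_of_pos hr, inv_mul_eq_iff_eq_mul₀ hr.ne',
    ← sq_eq_sq₀ (norm_nonneg _) (by positivity), ← sq_eq_sq₀ (norm_nonneg _) hR, hpyth, ← hrad]
  constructor <;> intro h <;> linarith

end SlicedSphere

theorem measurableSet_SH {γ : ℕ} (u : Fin γ → Ell2) (n : ℕ) : MeasurableSet (SH u n) := by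
  refine (Metric.isClosed_sphere.inter ?_).measurableSet
  simp only [Set.ofPred_forall]
  exact isClosed_iInter fun i => isClosed_eq (by fun_prop) continuous_const

theorem image_add_smul_SH {γ n : ℕ} {u : Fin γ → Ell2} {p : Fin γ → ℝ}
    {θ : EuclideanSpace ℝ (Fin n)} (hθA : ∀ i, ⟪θ, trunc n (u i)⟫ = p i)
    (hθmin : ∀ y ∈ {x : EuclideanSpace ℝ (Fin n) | ∀ i, ⟪x, trunc n (u i)⟫ = p i}, ‖θ‖ ≤ ‖y‖)
    (hθn : ‖θ‖ < Real.sqrt n) :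
    (fun x => θ + (Real.sqrt ((n : ℝ) - ‖θ‖ ^ 2) / Real.sqrt n) • x) '' SH u n = SA u p n := by
  have hsn : 0 < Real.sqrt n := (norm_nonneg θ).trans_lt hθn
  have hθsq : ‖θ‖ ^ 2 < n := (Real.lt_sqrt (norm_nonneg θ)).1 hθn
  refine image_add_smul_sphere_inter hθA (fun x => inner_eq_zero_of_isClosest hθA hθmin)
    (div_pos (Real.sqrt_pos.2 (by linarith)) hsn) hsn.le hsn.le ?_
  rw [div_mul_cancel₀ _ hsn.ne', Real.sq_sqrt (by linarith), Real.sq_sqrt (Nat.cast_nonneg n)]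
  ring

theorem projk_add_smul {k n : ℕ} (θ x : EuclideanSpace ℝ (Fin n)) (r : ℝ) :
    projk k n (θ + r • x) = projk k n θ + r • projk k n x := by
  ext i
  simp only [projk, EuclideanSpace.equiv, PiLp.add_apply, PiLp.smul_apply, smul_eq_mul,
    PiLp.continuousLinearEquiv_symm_apply, PiLp.toLp_apply]
  split <;> simp

theorem stmt15_general {k n γ : ℕ} (u : Fin γ → Ell2) (p : Fin γ → ℝ)
    (θ : EuclideanSpace ℝ (Fin n))
    (hθA : θ ∈ {x : EuclideanSpace ℝ (Fin n) | ∀ i, (inner ℝ x (trunc n (u i)) : ℝ) = p i})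
    (hθmin : ∀ y ∈ {x : EuclideanSpace ℝ (Fin n) | ∀ i, (inner ℝ x (trunc n (u i)) : ℝ) = p i},
      ‖θ‖ ≤ ‖y‖)
    (hθn : ‖θ‖ < Real.sqrt n)
    (B : Set (EuclideanSpace ℝ (Fin k))) :
    unifProb ((n : ℝ) - γ - 1) (SA u p n) {x | projk k n x ∈ B} =
      unifProb ((n : ℝ) - γ - 1) (SH u n)
        {x | projk k n x ∈
          (fun b => (Real.sqrt ((n : ℝ) - ‖θ‖ ^ 2) / Real.sqrt n)⁻¹ • (b - projk k n θ)) '' B} := by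
  set r := Real.sqrt ((n : ℝ) - ‖θ‖ ^ 2) / Real.sqrt n
  have hθsq : ‖θ‖ ^ 2 < n := (Real.lt_sqrt (norm_nonneg θ)).1 hθn
  have hr : r ≠ 0 :=
    (div_pos (Real.sqrt_pos.2 (sub_pos.2 hθsq)) ((norm_nonneg θ).trans_lt hθn)).ne'
  have hslice : {x | projk k n x ∈ (fun b => r⁻¹ • (b - projk k n θ)) '' B} =
      (fun x => θ + r • x) ⁻¹' {x | projk k n x ∈ B} := by
    rw [image_inv_smul_sub_eq_preimage _ hr]
    ext x
    simp [projk_add_smul]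
  rw [hslice, ← unifProb_image_add_smul _ _ hr (measurableSet_SH u n),
    image_add_smul_SH hθA hθmin hθn]

/-- **Translation–scaling relation between the sliced-sphere measures.** Let `k ≤ n`, let
`u⁽¹⁾,…,u⁽ᵞ⁾ ∈ ℓ²(ℝ)` be mutually orthonormal with linearly independent truncations
`(u⁽ⁱ⁾)_(n)`, let `θₙ` be the point of `A_n` closest to the origin with `‖θₙ‖ < √n`, and set
`rₙ = √(n − ‖θₙ‖²)/√n`. Then for every Borel `B ⊆ ℝ^k`,
`σ̄_{S_{A_n}}(π_k ∈ B) = σ̄_{S_{H_n}}(π_k ∈ rₙ⁻¹(B − π_k(θₙ)))`. -/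
theorem stmt15 {k n γ : ℕ} (hkn : k ≤ n) (u : Fin γ → Ell2) (hu : Orthonormal ℝ u)
    (hind : LinearIndependent ℝ (fun i => trunc n (u i))) (p : Fin γ → ℝ)
    (θ : EuclideanSpace ℝ (Fin n))
    (hθA : θ ∈ {x : EuclideanSpace ℝ (Fin n) | ∀ i, (inner ℝ x (trunc n (u i)) : ℝ) = p i})
    (hθmin : ∀ y ∈ {x : EuclideanSpace ℝ (Fin n) | ∀ i, (inner ℝ x (trunc n (u i)) : ℝ) = p i},
      ‖θ‖ ≤ ‖y‖)
    (hθn : ‖θ‖ < Real.sqrt n)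
    (B : Set (EuclideanSpace ℝ (Fin k))) (hB : MeasurableSet B) :
    unifProb ((n : ℝ) - γ - 1) (SA u p n) {x | projk k n x ∈ B} =
      unifProb ((n : ℝ) - γ - 1) (SH u n)
        {x | projk k n x ∈
          (fun b => (Real.sqrt ((n : ℝ) - ‖θ‖ ^ 2) / Real.sqrt n)⁻¹ • (b - projk k n θ)) '' B} :=
  stmt15_general u p θ hθA hθmin hθn B

end
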